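/- arXiv:2006.13483 — 7 statements merged into one kernel-verified Lean document; each statement's English description precedes it below -/
import Mathlib

section
/- Let S = {(P_i, S_i, ℓ_i)}_{i ∈ I} be a k-clique prefixed shadow of a finite simple graph G with weight w > 0. Then for every k-clique K of G, the probability that the shadow sampler outputs exactly the set K equals 1/w. -/
open Finset

variable {V : Type*}

/-- The `ℓ`-cliques of the induced subgraph `G[S]`, viewed as finsets of vertices of `G`:
these are exactly the `ℓ`-cliques of `G` contained in `S`. -/
def inducedCliques [Fintype V] [DecidableEq V] (G : SimpleGraph V) [DecidableRel G.Adj]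
    (S : Finset V) (ℓ : ℕ) : Finset (Finset V) :=
  (G.cliqueFinset ℓ).filter (· ⊆ S)

/-- `(P, S, ℓ)` (indexed by `i : I`) is a `k`-clique prefixed shadow of the induced subgraph
`G[W]`: all `Pᵢ, Sᵢ` are subsets of `W`, `|Pᵢ| + ℓᵢ = k`, and the map `(i, c) ↦ Pᵢ ∪ c`,
defined on pairs where `c` is an `ℓᵢ`-clique of `G[Sᵢ]`, is a bijection onto the set of
`k`-cliques of `G[W]`. -/
def IsPrefixedShadowOn {I : Type*} [Fintype V] [DecidableEq V]
    (G : SimpleGraph V) [DecidableRel G.Adj] (W : Finset V) (k : ℕ)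
    (P S : I → Finset V) (ℓ : I → ℕ) : Prop :=
  (∀ i, P i ⊆ W) ∧ (∀ i, S i ⊆ W) ∧ (∀ i, (P i).card + ℓ i = k) ∧
    Set.BijOn (fun p : (i : I) × Finset V => P p.1 ∪ p.2)
      {p : (i : I) × Finset V | p.2 ∈ inducedCliques G (S p.1) (ℓ p.1)}
      ↑((G.cliqueFinset k).filter (· ⊆ W))

/-- The weight `w = Σᵢ binom(|Sᵢ|, ℓᵢ)` of a prefixed shadow. -/
def shadowWeight {I : Type*} [Fintype I] (S : I → Finset V) (ℓ : I → ℕ) : ℕ :=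
  ∑ i, (S i).card.choose (ℓ i)

/-- The probability that the shadow sampler outputs the vertex set `A`: an index `i` is
picked with probability `binom(|Sᵢ|, ℓᵢ)/w`, then a uniformly random `ℓᵢ`-element subset
`c ⊆ Sᵢ` is picked, and the output is `Pᵢ ∪ c`. -/
noncomputable def shadowProb {I : Type*} [Fintype I] [DecidableEq V] (P S : I → Finset V) (ℓ : I → ℕ)
    (A : Finset V) : ℝ :=
  ∑ i, (((S i).card.choose (ℓ i) : ℝ) / (shadowWeight S ℓ : ℝ)) *
    (((((S i).powersetCard (ℓ i)).filter (fun c => P i ∪ c = A)).card : ℝ) /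
      ((S i).card.choose (ℓ i) : ℝ))

/-- For a `k`-clique prefixed shadow of `G` with weight `w > 0`, the probability that the
shadow sampler outputs exactly a given `k`-clique `K` of `G` equals `1/w`. -/
theorem shadowProb_of_clique {I : Type*} [Fintype I] [Fintype V] [DecidableEq V]
    (G : SimpleGraph V) [DecidableRel G.Adj] (k : ℕ)
    (P S : I → Finset V) (ℓ : I → ℕ)
    (hshadow : IsPrefixedShadowOn G Finset.univ k P S ℓ)
    (hw : 0 < shadowWeight S ℓ)
    (K : Finset V) (hK : K ∈ G.cliqueFinset k) :
    shadowProb P S ℓ K = 1 / (shadowWeight S ℓ : ℝ) := by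

  classical
  obtain ⟨hP, hS, hcard, hbij⟩ := hshadow
  have hwne : (shadowWeight S ℓ : ℝ) ≠ 0 := by
    exact_mod_cast hw.ne'
  -- the filter over all ℓᵢ-subsets equals the filter over cliques only
  have hfilter_eq : ∀ i, ((S i).powersetCard (ℓ i)).filter (fun c => P i ∪ c = K)
      = (inducedCliques G (S i) (ℓ i)).filter (fun c => P i ∪ c = K) := by
    intro i
    ext c
    simp only [mem_filter, mem_powersetCard, inducedCliques,
      SimpleGraph.mem_cliqueFinset_iff]
    constructor
    · rintro ⟨⟨hcS, hccard⟩, hU⟩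
      refine ⟨⟨⟨?_, hccard⟩, hcS⟩, hU⟩
      have hKcl := (SimpleGraph.mem_cliqueFinset_iff.mp hK).isClique
      have hsub : c ⊆ K := hU ▸ subset_union_right
      exact hKcl.subset hsub
    · rintro ⟨⟨⟨hcl, hccard⟩, hcS⟩, hU⟩
      exact ⟨⟨hcS, hccard⟩, hU⟩
  set T := fun i => (inducedCliques G (S i) (ℓ i)).filter (fun c => P i ∪ c = K) with hT
  -- exactly one pair (i, c) gives K
  have hmem : K ∈ ((G.cliqueFinset k).filter (· ⊆ (Finset.univ : Finset V))) := by
    simp [hK]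
  obtain ⟨p0, hp0, hfp0⟩ := hbij.surjOn (by exact_mod_cast hmem)
  have hsum : ∑ i, (T i).card = 1 := by
    rw [← Finset.card_sigma]
    rw [Finset.card_eq_one]
    refine ⟨p0, ?_⟩
    ext q
    simp only [Finset.mem_sigma, Finset.mem_singleton, Finset.mem_filter, hT,
      Finset.mem_univ, true_and]
    constructor
    · rintro ⟨hq1, hq2⟩
      exact hbij.injOn hq1 hp0 (by simpa [hfp0] using hq2)
    · rintro rfl
      exact ⟨hp0, hfp0⟩
  have hterm : ∀ i, (((S i).card.choose (ℓ i) : ℝ) / (shadowWeight S ℓ : ℝ)) *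
      (((((S i).powersetCard (ℓ i)).filter (fun c => P i ∪ c = K)).card : ℝ) /
        ((S i).card.choose (ℓ i) : ℝ)) = ((T i).card : ℝ) / (shadowWeight S ℓ : ℝ) := by
    intro i
    rw [hfilter_eq i]
    by_cases h : (S i).card.choose (ℓ i) = 0
    · have hcard0 : (T i).card = 0 := by
        simp only [hT]
        rw [← hfilter_eq i]
        have hle : (((S i).powersetCard (ℓ i)).filter (fun c => P i ∪ c = K)).card ≤
            ((S i).powersetCard (ℓ i)).card := Finset.card_le_card (Finset.filter_subset _ _)
        rw [Finset.card_powersetCard] at hle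
        omega
      simp [h, hcard0]
    · have h' : ((S i).card.choose (ℓ i) : ℝ) ≠ 0 := by exact_mod_cast h
      field_simp
      ring
  unfold shadowProb
  rw [Finset.sum_congr rfl (fun i _ => hterm i), ← Finset.sum_div, ← Nat.cast_sum, hsum,
    Nat.cast_one]
end

section
/- Let S be a k-clique prefixed shadow of a finite simple graph G with weight w > 0, and let f be a nonnegative real-valued function on the k-cliques of G with F = Σ_{K ∈ C_k(G)} f(K). Define the random variable X to equal f(A) if the output A of the shadow sampler is a k-clique of G, and 0 otherwise. Then E[X] = F/w; in particular, w·X is an unbiased estimator of F. -/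
open Finset

variable {V : Type*}

/-- Unbiasedness of the shadow-sampler estimator: if `X = f(A)` when the output `A` of the
shadow sampler is a `k`-clique of `G` and `X = 0` otherwise, then `E[X] = F/w`, where
`F = Σ_{K ∈ C_k(G)} f(K)`; in particular `w·X` is an unbiased estimator of `F`. -/
theorem shadow_estimator_unbiased {I : Type*} [Fintype I] [Fintype V] [DecidableEq V]
    (G : SimpleGraph V) [DecidableRel G.Adj] (k : ℕ)
    (P S : I → Finset V) (ℓ : I → ℕ)
    (hshadow : IsPrefixedShadowOn G Finset.univ k P S ℓ)
    (hw : 0 < shadowWeight S ℓ)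
    (f : Finset V → ℝ) (hf : ∀ K, 0 ≤ f K)
    (F : ℝ) (hF : F = ∑ K ∈ G.cliqueFinset k, f K) :
    ∑ A : Finset V, shadowProb P S ℓ A * (if A ∈ G.cliqueFinset k then f A else 0) =
      F / (shadowWeight S ℓ : ℝ) := by
  classical
  obtain ⟨hP, hS, hcard, hbij⟩ := hshadow
  have hfilt : (G.cliqueFinset k).filter (· ⊆ (Finset.univ : Finset V)) = G.cliqueFinset k :=
    Finset.filter_true_of_mem fun K _ => Finset.subset_univ K
  rw [hfilt] at hbij
  have hw0 : (shadowWeight S ℓ : ℝ) ≠ 0 := Nat.cast_ne_zero.mpr hw.ne'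
  set g : Finset V → ℝ := fun A => if A ∈ G.cliqueFinset k then f A else 0 with hg
  have hprob : ∀ A : Finset V, shadowProb P S ℓ A =
      (∑ i, ((((S i).powersetCard (ℓ i)).filter (fun c => P i ∪ c = A)).card : ℝ)) /
        (shadowWeight S ℓ : ℝ) := by
    intro A
    rw [Finset.sum_div]
    refine Finset.sum_congr rfl fun i _ => ?_
    by_cases h : (S i).card.choose (ℓ i) = 0
    · have hemp : (S i).powersetCard (ℓ i) = ∅ :=
        Finset.powersetCard_eq_empty.mpr (Nat.choose_eq_zero_iff.mp h)
      simp [hemp, h]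
    · have h' : ((S i).card.choose (ℓ i) : ℝ) ≠ 0 := Nat.cast_ne_zero.mpr h
      field_simp
  have hfib : ∀ i, ∑ A : Finset V,
      ((((S i).powersetCard (ℓ i)).filter (fun c => P i ∪ c = A)).card : ℝ) * g A
      = ∑ c ∈ (S i).powersetCard (ℓ i), g (P i ∪ c) := by
    intro i
    rw [← Finset.sum_fiberwise_of_maps_to (g := fun c => P i ∪ c)
      (fun c _ => Finset.mem_univ (P i ∪ c)) (fun c => g (P i ∪ c))]
    refine Finset.sum_congr rfl fun A _ => ?_
    rw [Finset.sum_congr rfl (fun c hc => by rw [(Finset.mem_filter.mp hc).2]),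
      Finset.sum_const, nsmul_eq_mul]
  calc ∑ A : Finset V, shadowProb P S ℓ A * g A
      = (∑ i, ∑ c ∈ (S i).powersetCard (ℓ i), g (P i ∪ c)) / (shadowWeight S ℓ : ℝ) := by
        simp only [hprob, div_mul_eq_mul_div, Finset.sum_mul, Finset.sum_div]
        rw [Finset.sum_comm]
        exact Finset.sum_congr rfl fun i _ => by
          rw [← Finset.sum_div, ← Finset.sum_div, hfib i]
    _ = (∑ i, ∑ c ∈ inducedCliques G (S i) (ℓ i), f (P i ∪ c)) / (shadowWeight S ℓ : ℝ) := by
        congr 1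
        refine Finset.sum_congr rfl fun i _ => ?_
        rw [hg, ← Finset.sum_filter]
        refine Finset.sum_congr ?_ fun c _ => rfl
        ext c
        simp only [Finset.mem_filter, Finset.mem_powersetCard, inducedCliques,
          SimpleGraph.mem_cliqueFinset_iff]
        constructor
        · rintro ⟨⟨hcs, hcc⟩, hcl⟩
          exact ⟨⟨hcl.isClique.subset (Finset.coe_subset.mpr Finset.subset_union_right), hcc⟩, hcs⟩
        · rintro ⟨hc, hcs⟩
          have hmem : (⟨i, c⟩ : (j : I) × Finset V) ∈
              {p : (j : I) × Finset V | p.2 ∈ inducedCliques G (S p.1) (ℓ p.1)} := by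
            simp [inducedCliques, SimpleGraph.mem_cliqueFinset_iff, hc, hcs]
          have := hbij.mapsTo hmem
          exact ⟨⟨hcs, hc.2⟩, by simpa using this⟩
    _ = F / (shadowWeight S ℓ : ℝ) := by
        congr 1
        rw [hF, ← Finset.sum_sigma Finset.univ (fun i => inducedCliques G (S i) (ℓ i))
          (fun p => f (P p.1 ∪ p.2))]
        refine Finset.sum_bij (fun p _ => P p.1 ∪ p.2) ?_ ?_ ?_ ?_
        · intro p hp
          have := hbij.mapsTo (Finset.mem_sigma.mp hp).2
          simpa using this
        · intro p hp q hq h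
          exact hbij.injOn (Finset.mem_sigma.mp hp).2 (Finset.mem_sigma.mp hq).2 h
        · intro K hK
          obtain ⟨p, hp, hpe⟩ := hbij.surjOn (by simpa using hK)
          exact ⟨p, Finset.mem_sigma.mpr ⟨Finset.mem_univ _, hp⟩, hpe⟩
        · intros; rfl
end

section
/- Let G be a finite simple graph whose vertex set V carries a linear order <, and fix h ≥ 1. For each vertex v let Φ_v = binom(|N_v^+|, h−1) and let Φ = Σ_v Φ_v, and assume Φ > 0. For each vertex v with Φ_v > 0, let S_v be an (h−1)-clique prefixed shadow of G[N_v^+] with weight φ_v > 0. Consider the two-stage sampler that picks a vertex v with probability Φ_v/Φ and then outputs {v} ∪ A, where A is the output of the shadow sampler for S_v. Then for every h-clique K of G with minimum vertex v, the probability that the output equals K is Φ_v / (Φ · φ_v). -/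
open Finset

variable {V : Type*}

/-- The out-neighborhood of `v`: neighbors of `v` that are greater than `v`
in the linear order on the vertices. -/
def outNbr [Fintype V] [LinearOrder V] (G : SimpleGraph V) [DecidableRel G.Adj] (v : V) :
    Finset V := Finset.univ.filter (fun u => G.Adj v u ∧ v < u)

lemma shadowProb_support {I : Type*} [Fintype I] [DecidableEq V]
    (P S : I → Finset V) (ℓ : I → ℕ) (A : Finset V)
    (h : shadowProb P S ℓ A ≠ 0) : ∃ i c, c ⊆ S i ∧ P i ∪ c = A := by
  unfold shadowProb at h
  obtain ⟨i, -, hi⟩ := Finset.exists_ne_zero_of_sum_ne_zero h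
  have hne : (((S i).powersetCard (ℓ i)).filter (fun c => P i ∪ c = A)).Nonempty := by
    rw [Finset.nonempty_iff_ne_empty]
    intro he
    rw [he] at hi
    simp at hi
  obtain ⟨c, hc⟩ := hne
  rw [Finset.mem_filter, Finset.mem_powersetCard] at hc
  exact ⟨i, c, hc.1.1, hc.2⟩

lemma shadowProb_eq_of_mem {I : Type*} [Fintype I] [Fintype V] [DecidableEq V]
    (G : SimpleGraph V) [DecidableRel G.Adj] (W : Finset V) (k : ℕ)
    (P S : I → Finset V) (ℓ : I → ℕ)
    (hsh : IsPrefixedShadowOn G W k P S ℓ)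
    (A : Finset V) (hA : A ∈ (G.cliqueFinset k).filter (· ⊆ W)) :
    shadowProb P S ℓ A = 1 / (shadowWeight S ℓ : ℝ) := by
  obtain ⟨hP, hS, hcard, hbij⟩ := hsh
  obtain ⟨p₀, hp₀dom, hp₀eq⟩ := hbij.2.2 (by exact_mod_cast hA)
  obtain ⟨i₀, c₀⟩ := p₀
  simp only at hp₀eq
  have hAclique : G.IsNClique k A := SimpleGraph.mem_cliqueFinset_iff.1 (Finset.mem_filter.1 hA).1
  have hc₀ : c₀ ∈ inducedCliques G (S i₀) (ℓ i₀) := hp₀dom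
  rw [inducedCliques, Finset.mem_filter, SimpleGraph.mem_cliqueFinset_iff] at hc₀
  have claim : ∀ i c, c ⊆ S i → c.card = ℓ i → P i ∪ c = A →
      (⟨i, c⟩ : (i : I) × Finset V) = ⟨i₀, c₀⟩ := by
    intro i c hcS hcc hceq
    have hdom : (⟨i, c⟩ : (i : I) × Finset V) ∈
        {p : (i : I) × Finset V | p.2 ∈ inducedCliques G (S p.1) (ℓ p.1)} := by
      simp only [Set.mem_setOf_eq, inducedCliques, Finset.mem_filter,
        SimpleGraph.mem_cliqueFinset_iff]
      refine ⟨⟨hAclique.1.subset ?_, hcc⟩, hcS⟩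
      intro x hx
      exact_mod_cast (hceq ▸ Finset.subset_union_right) hx
    exact hbij.2.1 hdom hp₀dom (by simpa using hceq.trans hp₀eq.symm)
  haveI := Classical.decEq I
  have key : ∀ i, (((S i).powersetCard (ℓ i)).filter (fun c => P i ∪ c = A)) =
      if i = i₀ then {c₀} else ∅ := by
    intro i
    ext c
    simp only [Finset.mem_filter, Finset.mem_powersetCard]
    constructor
    · rintro ⟨⟨hcS, hcc⟩, hceq⟩
      have := claim i c hcS hcc hceq
      rw [Sigma.mk.inj_iff] at this
      obtain ⟨rfl, h2⟩ := this
      simp [heq_iff_eq.1 h2]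
    · intro hc
      by_cases hi : i = i₀
      · subst hi
        rw [if_pos rfl, Finset.mem_singleton] at hc
        subst hc
        exact ⟨⟨hc₀.2, hc₀.1.2⟩, hp₀eq⟩
      · rw [if_neg hi] at hc
        simp at hc
  have hchoose : 0 < ((S i₀).card.choose (ℓ i₀)) :=
    Nat.choose_pos (hc₀.1.2 ▸ Finset.card_le_card hc₀.2)
  unfold shadowProb
  rw [Finset.sum_eq_single i₀]
  · rw [key i₀, if_pos rfl]
    simp only [Finset.card_singleton, Nat.cast_one]
    rw [div_mul_div_comm, mul_one, div_mul_eq_div_div, div_right_comm,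
      div_self (show (((S i₀).card.choose (ℓ i₀) : ℕ) : ℝ) ≠ 0 by exact_mod_cast hchoose.ne')]
  · intro i _ hi
    rw [key i, if_neg hi]
    simp
  · simp

/-- For the two-stage sampler (pick `v` with probability `Φ_v/Φ`, then output `{v} ∪ A`
where `A` is the output of the shadow sampler for an `(h−1)`-clique prefixed shadow `S_v`
of `G[N_v⁺]` with weight `φ_v > 0`), the probability that the output equals a given
`h`-clique `K` of `G` with minimum vertex `v` is `Φ_v / (Φ · φ_v)`. -/
theorem twoStage_prob_of_clique [Fintype V] [LinearOrder V]
    (G : SimpleGraph V) [DecidableRel G.Adj] (h : ℕ) (hh : 1 ≤ h)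
    {I : V → Type*} [∀ v, Fintype (I v)]
    (P S : ∀ v, I v → Finset V) (ℓ : ∀ v, I v → ℕ)
    (Φ : V → ℕ) (hΦ : ∀ v, Φ v = ((outNbr G v).card.choose (h - 1)))
    (Φt : ℕ) (hΦt : Φt = ∑ v, Φ v) (hΦpos : 0 < Φt)
    (hshadow : ∀ v, 0 < Φ v →
      IsPrefixedShadowOn G (outNbr G v) (h - 1) (P v) (S v) (ℓ v) ∧
        0 < shadowWeight (S v) (ℓ v))
    (K : Finset V) (hK : K ∈ G.cliqueFinset h)
    (v : V) (hv : v ∈ K) (hmin : ∀ u ∈ K, v ≤ u) :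
    (∑ v' : V, ((Φ v' : ℝ) / (Φt : ℝ)) *
        (∑ A : Finset V,
          if insert v' A = K then shadowProb (P v') (S v') (ℓ v') A else 0)) =
      (Φ v : ℝ) / ((Φt : ℝ) * (shadowWeight (S v) (ℓ v) : ℝ)) := by
  classical
  have hKcl : G.IsNClique h K := SimpleGraph.mem_cliqueFinset_iff.1 hK
  have herase_card : (K.erase v).card = h - 1 := by
    rw [Finset.card_erase_of_mem hv, hKcl.2]
  have herase_sub : K.erase v ⊆ outNbr G v := by
    intro u hu
    rw [Finset.mem_erase] at hu
    have hlt : v < u := lt_of_le_of_ne (hmin u hu.2) (Ne.symm hu.1)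
    simp only [outNbr, Finset.mem_filter, Finset.mem_univ, true_and]
    exact ⟨hKcl.1 (by simpa using hv) (by simpa using hu.2) (Ne.symm hu.1), hlt⟩
  have hKer_mem : K.erase v ∈ (G.cliqueFinset (h-1)).filter (· ⊆ outNbr G v) := by
    rw [Finset.mem_filter, SimpleGraph.mem_cliqueFinset_iff]
    exact ⟨⟨hKcl.1.subset (Finset.coe_subset.2 (Finset.erase_subset _ _)), herase_card⟩,
      herase_sub⟩
  have hΦv : 0 < Φ v := by
    rw [hΦ v]
    exact Nat.choose_pos (herase_card ▸ Finset.card_le_card herase_sub)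
  obtain ⟨hsh, hw⟩ := hshadow v hΦv
  rw [Finset.sum_eq_single v]
  · have hinner : (∑ A : Finset V,
        if insert v A = K then shadowProb (P v) (S v) (ℓ v) A else 0)
        = shadowProb (P v) (S v) (ℓ v) (K.erase v) := by
      rw [Finset.sum_eq_single (K.erase v)]
      · rw [if_pos (Finset.insert_erase hv)]
      · intro A _ hA
        by_cases hcond : insert v A = K
        · rw [if_pos hcond]
          by_contra hne0
          obtain ⟨i, c, hcS, hceq⟩ := shadowProb_support _ _ _ _ hne0
          have hvA : v ∈ A := by
            by_contra hvA
            exact hA (by rw [← hcond, Finset.erase_insert hvA])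
          have hsub : A ⊆ outNbr G v :=
            hceq ▸ Finset.union_subset (hsh.1 i) (hcS.trans (hsh.2.1 i))
          have := hsub hvA
          simp [outNbr] at this
        · rw [if_neg hcond]
      · simp
    rw [hinner, shadowProb_eq_of_mem G (outNbr G v) (h-1) _ _ _ hsh _ hKer_mem]
    rw [div_mul_div_comm, mul_one]
  · intro v' _ hv'
    by_cases hΦ' : 0 < Φ v'
    · obtain ⟨hsh', -⟩ := hshadow v' hΦ'
      have hz : (∑ A : Finset V,
          if insert v' A = K then shadowProb (P v') (S v') (ℓ v') A else 0) = 0 := by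
        apply Finset.sum_eq_zero
        intro A _
        by_cases hcond : insert v' A = K
        · rw [if_pos hcond]
          by_contra hne0
          obtain ⟨i, c, hcS, hceq⟩ := shadowProb_support _ _ _ _ hne0
          have hv'K : v' ∈ K := hcond ▸ Finset.mem_insert_self v' A
          have hvv' : v < v' := lt_of_le_of_ne (hmin v' hv'K) (Ne.symm hv')
          have hvA : v ∈ A := by
            have hvK : v ∈ insert v' A := hcond ▸ hv
            rcases Finset.mem_insert.1 hvK with h1 | h1
            · exact absurd h1 (ne_of_lt hvv')
            · exact h1
          have hsub : A ⊆ outNbr G v' :=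
            hceq ▸ Finset.union_subset (hsh'.1 i) (hcS.trans (hsh'.2.1 i))
          have := hsub hvA
          simp only [outNbr, Finset.mem_filter] at this
          exact absurd this.2.2 (not_lt.2 hvv'.le)
        · rw [if_neg hcond]
      rw [hz, mul_zero]
    · have h0 : Φ v' = 0 := Nat.le_zero.1 (not_lt.1 hΦ')
      rw [h0]
      simp
  · simp
end

section
/- Let G be a finite simple graph and let J be a Type 1 (k,2)-clique of G with k ≥ 3, whose two non-adjacent pairs share the common vertex w. Then J contains exactly one (k−1)-element subset that is a clique of G, namely J \ {w}. -/
open Finset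

variable {V : Type*}

/-- `J` is a set of `k` vertices containing exactly two non-adjacent pairs of distinct
vertices, namely `{w, a}` and `{w, b}`, which share the common vertex `w`:
a Type 1 `(k,2)`-clique with missing edges `{w, a}` and `{w, b}`. -/
def IsType1NearClique2 [DecidableEq V] (G : SimpleGraph V) (k : ℕ) (J : Finset V)
    (w a b : V) : Prop :=
  J.card = k ∧ w ∈ J ∧ a ∈ J ∧ b ∈ J ∧ a ≠ b ∧ w ≠ a ∧ w ≠ b ∧
    ¬G.Adj w a ∧ ¬G.Adj w b ∧
    ∀ x ∈ J, ∀ y ∈ J, x ≠ y → ¬G.Adj x y →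
      ({x, y} : Finset V) = {w, a} ∨ ({x, y} : Finset V) = {w, b}

/-- `J` is a Type 1 `(k,2)`-clique of `G`: a set of `k` vertices containing exactly two
non-adjacent pairs of distinct vertices, and the two non-adjacent pairs share a common
vertex. -/
def IsKTwoCliqueType1 [DecidableEq V] (G : SimpleGraph V) (k : ℕ) (J : Finset V) : Prop :=
  ∃ w a b, IsType1NearClique2 G k J w a b

/-- A Type 1 `(k,2)`-clique `J` whose two non-adjacent pairs share the common vertex `w`
contains exactly one `(k−1)`-element subset that is a clique of `G`, namely `J \ {w}`. -/
theorem type1_unique_subclique [DecidableEq V] (G : SimpleGraph V) (k : ℕ) (hk : 3 ≤ k)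
    (J : Finset V) (w : V) (hJ : ∃ a b, IsType1NearClique2 G k J w a b) :
    {s : Finset V | s ⊆ J ∧ G.IsNClique (k - 1) s} = {J \ {w}} := by
  obtain ⟨a, b, hcard, hw, ha, hb, hab, hwa, hwb, hGa, hGb, huniq⟩ := hJ
  have hJw : (J \ {w}).card = k - 1 := by
    rw [Finset.card_sdiff_of_subset (by simpa using hw), hcard, Finset.card_singleton]
  ext s
  simp only [Set.mem_setOf_eq, Set.mem_singleton_iff]
  constructor
  · rintro ⟨hsub, hclq, hscard⟩
    have hws : w ∉ s := by
      intro hws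
      -- at least one of a, b is in s
      have hmiss : (J \ s).card = 1 := by
        rw [Finset.card_sdiff_of_subset hsub, hcard, hscard]
        omega
      obtain ⟨v, hv⟩ := Finset.card_eq_one.mp hmiss
      have hseq : s = J \ {v} := by
        rw [← hv]
        have := Finset.sdiff_sdiff_eq_self hsub
        exact this.symm
      have hkey : ∀ c : V, c ∈ J → ¬ G.Adj w c → w ≠ c → c ∉ s := by
        intro c hcJ hGc hwc hcs
        exact hGc (hclq hws hcs hwc)
      have hav : a = v := by
        by_contra hne
        exact hkey a ha hGa hwa (by rw [hseq]; simp [ha, hne])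
      have hbv : b = v := by
        by_contra hne
        exact hkey b hb hGb hwb (by rw [hseq]; simp [hb, hne])
      exact hab (hav.trans hbv.symm)
    have hsub' : s ⊆ J \ {w} := by
      intro x hx
      simp only [Finset.mem_sdiff, Finset.mem_singleton]
      exact ⟨hsub hx, fun h => hws (h ▸ hx)⟩
    exact Finset.eq_of_subset_of_card_le hsub' (by omega)
  · rintro rfl
    refine ⟨Finset.sdiff_subset, ?_, hJw⟩
    intro x hx y hy hxy
    simp only [Finset.coe_sdiff, Set.mem_diff, Finset.mem_coe, Finset.coe_singleton,
      Set.mem_singleton_iff] at hx hy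
    by_contra hadj
    rcases huniq x hx.1 y hy.1 hxy hadj with h | h <;>
    · have : w ∈ ({x, y} : Finset V) := by rw [h]; simp
      simp only [Finset.mem_insert, Finset.mem_singleton] at this
      rcases this with h' | h' <;> simp_all
end

section
/- Let G be a finite simple graph on n vertices with maximum degree Δ and let k ≥ 4. Then for every (k−1)-clique K of G, the number of Type 1 (k,2)-cliques of G that contain K is at most min(3Δ, n). -/
open Finset

variable {V : Type*}

/-- For every `(k−1)`-clique `K` of a graph `G` on `n` vertices with maximum degree `Δ`,
the number of Type 1 `(k,2)`-cliques of `G` that contain `K` is at most `min(3Δ, n)`. -/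
theorem type1_count_le [Fintype V] [DecidableEq V]
    (G : SimpleGraph V) [DecidableRel G.Adj] (k : ℕ) (hk : 4 ≤ k)
    (K : Finset V) (hK : K ∈ G.cliqueFinset (k - 1)) :
    {J : Finset V | IsKTwoCliqueType1 G k J ∧ K ⊆ J}.ncard ≤
      min (3 * G.maxDegree) (Fintype.card V) := by
  rw [SimpleGraph.mem_cliqueFinset_iff] at hK
  obtain ⟨hKc, hKcard⟩ := hK
  have hK3 : 3 ≤ K.card := by omega
  obtain ⟨T, hTK, hT3⟩ := Finset.exists_subset_card_eq hK3
  set N : Finset V := T.biUnion (fun u => G.neighborFinset u) with hNdef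
  -- every J in our set is `insert v K` for some v ∈ N \ K
  have key : {J : Finset V | IsKTwoCliqueType1 G k J ∧ K ⊆ J} ⊆
      (fun v => insert v K) '' ↑(N \ K) := by
    rintro J ⟨⟨w, a, b, hJk, hw, ha, hb, hab, hwa, hwb, hAwa, hAwb, hmax⟩, hKJ⟩
    have hcard1 : (J \ K).card = 1 := by
      rw [Finset.card_sdiff_of_subset hKJ, hJk, hKcard]; omega
    obtain ⟨v, hv⟩ := Finset.card_eq_one.mp hcard1
    have hmemv : ∀ x, x ∈ J → x ∉ K → x = v := by
      intro x hxJ hxK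
      have : x ∈ J \ K := Finset.mem_sdiff.mpr ⟨hxJ, hxK⟩
      rw [hv] at this
      exact Finset.mem_singleton.mp this
    have hvJ : v ∈ J := by
      have : v ∈ J \ K := by rw [hv]; exact Finset.mem_singleton_self v
      exact (Finset.mem_sdiff.mp this).1
    have hvK : v ∉ K := by
      have : v ∈ J \ K := by rw [hv]; exact Finset.mem_singleton_self v
      exact (Finset.mem_sdiff.mp this).2
    have hJeq : J = insert v K := by
      have h1 := Finset.sdiff_union_of_subset hKJ
      rw [hv] at h1
      rw [Finset.insert_eq]
      exact h1.symm
    -- w = v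
    have hwv : w = v := by
      by_contra hne
      have hwK : w ∈ K := by
        by_contra hwK
        exact hne (hmemv w hw hwK)
      have haK : a ∉ K := fun haK => hAwa (hKc hwK haK hwa)
      have hbK : b ∉ K := fun hbK => hAwb (hKc hwK hbK hwb)
      have ha' := hmemv a ha haK
      have hb' := hmemv b hb hbK
      exact hab (ha'.trans hb'.symm)
    rw [hwv] at hwa hwb hmax
    -- a, b ∈ K
    have haK : a ∈ K := by
      by_contra haK
      exact hwa (hmemv a ha haK).symm
    have hbK : b ∈ K := by
      by_contra hbK
      exact hwb (hmemv b hb hbK).symm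
    -- find u ∈ T with u ≠ a, u ≠ b
    have hTab : (T \ ({a, b} : Finset V)).Nonempty := by
      rw [← Finset.card_pos]
      have h2 : ({a, b} : Finset V).card ≤ 2 := Finset.card_le_two
      have := Finset.le_card_sdiff ({a, b} : Finset V) T
      omega
    obtain ⟨u, hu⟩ := hTab
    obtain ⟨huT, huab⟩ := Finset.mem_sdiff.mp hu
    have hua : u ≠ a := fun h => huab (by simp [h])
    have hub : u ≠ b := fun h => huab (by simp [h])
    have huK : u ∈ K := hTK huT
    have huv : v ≠ u := fun h => hvK (h ▸ huK)
    -- v is adjacent to u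
    have hAdj : G.Adj v u := by
      by_contra hA
      rcases hmax v hvJ u (hKJ huK) huv hA with h | h
      · have : u ∈ ({v, a} : Finset V) := h ▸ (by simp : u ∈ ({v, u} : Finset V))
        rcases Finset.mem_insert.mp this with h' | h'
        · exact huv h'.symm
        · exact hua (Finset.mem_singleton.mp h')
      · have : u ∈ ({v, b} : Finset V) := h ▸ (by simp : u ∈ ({v, u} : Finset V))
        rcases Finset.mem_insert.mp this with h' | h'
        · exact huv h'.symm
        · exact hub (Finset.mem_singleton.mp h')
    refine ⟨v, ?_, hJeq.symm⟩
    rw [Finset.coe_sdiff]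
    refine ⟨?_, hvK⟩
    simp only [hNdef, Finset.coe_biUnion, Set.mem_iUnion]
    exact ⟨u, huT, by simp [SimpleGraph.mem_neighborFinset, hAdj.symm]⟩
  calc {J : Finset V | IsKTwoCliqueType1 G k J ∧ K ⊆ J}.ncard
      ≤ ((fun v => insert v K) '' ↑(N \ K)).ncard :=
        Set.ncard_le_ncard key (((N \ K).finite_toSet).image _)
    _ ≤ (↑(N \ K) : Set V).ncard := Set.ncard_image_le ((N \ K).finite_toSet)
    _ = (N \ K).card := Set.ncard_coe_finset _
    _ ≤ min (3 * G.maxDegree) (Fintype.card V) := by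
        refine le_min ?_ (Finset.card_le_univ _)
        calc (N \ K).card ≤ N.card := Finset.card_le_card (Finset.sdiff_subset)
          _ ≤ ∑ u ∈ T, (G.neighborFinset u).card := Finset.card_biUnion_le
          _ ≤ ∑ u ∈ T, G.maxDegree := Finset.sum_le_sum (fun u _ => by
              rw [G.card_neighborFinset_eq_degree]; exact G.degree_le_maxDegree u)
          _ = 3 * G.maxDegree := by rw [Finset.sum_const, hT3, smul_eq_mul]
end

section
/- Let G be a finite simple graph on n vertices with maximum degree Δ, whose vertex set carries a linear order < such that every vertex has at most α neighbors greater than itself, and let k ≥ 4. Then for every (k−2)-clique K of G, the number of Type 2 (k,2)-cliques J of G whose lowest-order (k−2)-clique equals K is at most min(n², k²·α·Δ/2). -/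
open Finset

variable {V : Type*}

/-- `J` is a set of `k` vertices containing exactly two non-adjacent pairs of distinct
vertices, namely `{u, v}` and `{w, x}`, which are disjoint: a Type 2 `(k,2)`-clique
with missing edges `{u, v}` and `{w, x}`. -/
def IsType2NearClique2 [DecidableEq V] (G : SimpleGraph V) (k : ℕ) (J : Finset V)
    (u v w x : V) : Prop :=
  J.card = k ∧ u ∈ J ∧ v ∈ J ∧ w ∈ J ∧ x ∈ J ∧
    u ≠ v ∧ w ≠ x ∧ u ≠ w ∧ u ≠ x ∧ v ≠ w ∧ v ≠ x ∧
    ¬G.Adj u v ∧ ¬G.Adj w x ∧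
    ∀ a ∈ J, ∀ b ∈ J, a ≠ b → ¬G.Adj a b →
      ({a, b} : Finset V) = {u, v} ∨ ({a, b} : Finset V) = {w, x}

/-- `J` is a Type 2 `(k,2)`-clique of `G`: a set of `k` vertices containing exactly two
non-adjacent pairs of distinct vertices, and the two non-adjacent pairs are disjoint. -/
def IsKTwoCliqueType2 [DecidableEq V] (G : SimpleGraph V) (k : ℕ) (J : Finset V) : Prop :=
  ∃ u v w x, IsType2NearClique2 G k J u v w x

/-- `K` is the lowest-order `(k−2)`-clique of the Type 2 `(k,2)`-clique `J`: the
non-adjacent pairs of `J` can be labeled `{u, v}` and `{w, x}` with `u < v`, `u < w`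
and `w < x` (so `u` is the minimum of `u, v, w, x`), and `K = J \ {v, x}`. -/
def IsLowestOrderClique [LinearOrder V] (G : SimpleGraph V) (k : ℕ) (J K : Finset V) :
    Prop :=
  ∃ u v w x, IsType2NearClique2 G k J u v w x ∧ u < v ∧ u < w ∧ w < x ∧
    K = J \ ({v, x} : Finset V)

/-- Let `G` be a graph on `n` vertices with maximum degree `Δ`, whose linearly ordered
vertex set is such that every vertex has at most `α` neighbors greater than itself. Then
for every `(k−2)`-clique `K` of `G`, the number of Type 2 `(k,2)`-cliques whose
lowest-order `(k−2)`-clique equals `K` is at most `min(n², k²·α·Δ/2)`. -/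
theorem lowestOrder_count_le [Fintype V] [LinearOrder V]
    (G : SimpleGraph V) [DecidableRel G.Adj] (k : ℕ) (hk : 4 ≤ k) (α : ℕ)
    (hα : ∀ v : V, (Finset.univ.filter (fun u => G.Adj v u ∧ v < u)).card ≤ α)
    (K : Finset V) (hK : K ∈ G.cliqueFinset (k - 2)) :
    ({J : Finset V | IsLowestOrderClique G k J K}.ncard : ℝ) ≤
      min ((Fintype.card V : ℝ) ^ 2) ((k : ℝ) ^ 2 * (α : ℝ) * (G.maxDegree : ℝ) / 2) := by

  classical
  have hKcard : K.card = k - 2 := (SimpleGraph.mem_cliqueFinset_iff.mp hK).card_eq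
  set f : V × V → Finset V := fun p => insert p.1 (insert p.2 K) with hf
  set S : Set (Finset V) := {J : Finset V | IsLowestOrderClique G k J K} with hS
  have key : ∀ J ∈ S, ∃ u v w x : V, u ∈ K ∧ w ∈ K ∧ u < w ∧
      G.Adj w v ∧ G.Adj u x ∧ u < x ∧ J = f (v, x) := by
    rintro J ⟨u, v, w, x,
      ⟨hcard, huJ, hvJ, hwJ, hxJ, huv, hwx, huw, hux, hvw, hvx, hnuv, hnwx, hmax⟩,
      huv', huw', hwx', hKeq⟩
    have huK : u ∈ K := by
      rw [hKeq]; simp only [Finset.mem_sdiff, Finset.mem_insert, Finset.mem_singleton]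
      exact ⟨huJ, by tauto⟩
    have hwK : w ∈ K := by
      rw [hKeq]; simp only [Finset.mem_sdiff, Finset.mem_insert, Finset.mem_singleton]
      exact ⟨hwJ, by rintro (rfl | rfl); exact hvw rfl; exact hwx rfl⟩
    have hawv : G.Adj w v := by
      by_contra h
      rcases hmax w hwJ v hvJ (Ne.symm hvw) h with h1 | h1
      · have hm : w ∈ ({u, v} : Finset V) := by rw [← h1]; simp
        simp only [Finset.mem_insert, Finset.mem_singleton] at hm
        rcases hm with rfl | rfl
        · exact huw rfl
        · exact hvw rfl
      · have hm : v ∈ ({w, x} : Finset V) := by rw [← h1]; simp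
        simp only [Finset.mem_insert, Finset.mem_singleton] at hm
        rcases hm with rfl | rfl
        · exact hvw rfl
        · exact hvx rfl
    have haux : G.Adj u x := by
      by_contra h
      rcases hmax u huJ x hxJ hux h with h1 | h1
      · have hm : x ∈ ({u, v} : Finset V) := by rw [← h1]; simp
        simp only [Finset.mem_insert, Finset.mem_singleton] at hm
        rcases hm with rfl | rfl
        · exact hux rfl
        · exact hvx rfl
      · have hm : u ∈ ({w, x} : Finset V) := by rw [← h1]; simp
        simp only [Finset.mem_insert, Finset.mem_singleton] at hm
        rcases hm with rfl | rfl
        · exact huw rfl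
        · exact hux rfl
    have hsub : ({v, x} : Finset V) ⊆ J := by
      intro a ha
      simp only [Finset.mem_insert, Finset.mem_singleton] at ha
      rcases ha with rfl | rfl <;> assumption
    have hJeq : J = f (v, x) := by
      have h2 : insert v (insert x K) = ({v, x} : Finset V) ∪ K := by
        ext a; simp [Finset.mem_union]
      rw [hf]
      simp only
      rw [h2, hKeq, Finset.union_sdiff_of_subset hsub]
    exact ⟨u, v, w, x, huK, hwK, huw', hawv, haux, huw'.trans hwx', hJeq⟩
  -- first bound
  have hb1 : S.ncard ≤ Fintype.card V * Fintype.card V := by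
    have hsub : S ⊆ ↑((Finset.univ : Finset (V × V)).image f) := by
      intro J hJ
      obtain ⟨u, v, w, x, _, _, _, _, _, _, hJeq⟩ := key J hJ
      simp only [Finset.coe_image, Set.mem_image, Finset.mem_coe, Finset.mem_univ]
      exact ⟨(v, x), by simp, hJeq.symm⟩
    calc S.ncard ≤ ((Finset.univ : Finset (V × V)).image f : Set (Finset V)).ncard :=
          Set.ncard_le_ncard hsub (Set.toFinite _)
      _ = ((Finset.univ : Finset (V × V)).image f).card := Set.ncard_coe_finset _
      _ ≤ (Finset.univ : Finset (V × V)).card := Finset.card_image_le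
      _ = Fintype.card V * Fintype.card V := by simp [Finset.card_univ, Fintype.card_prod]
  -- second bound
  set pairs : Finset (V × V) := (K ×ˢ K).filter (fun q => q.1 < q.2) with hpairs
  set g : V × V → Finset (V × V) := fun q =>
    (Finset.univ.filter (G.Adj q.2)) ×ˢ (Finset.univ.filter (fun b => G.Adj q.1 b ∧ q.1 < b))
    with hg
  have hb2 : S.ncard ≤ pairs.card * (G.maxDegree * α) := by
    have hsub : S ⊆ ↑((pairs.biUnion g).image f) := by
      intro J hJ
      obtain ⟨u, v, w, x, huK, hwK, huw, hawv, haux, huxlt, hJeq⟩ := key J hJ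
      simp only [Finset.coe_image, Set.mem_image, Finset.mem_coe]
      refine ⟨(v, x), ?_, hJeq.symm⟩
      rw [Finset.mem_biUnion]
      refine ⟨(u, w), ?_, ?_⟩
      · rw [hpairs, Finset.mem_filter, Finset.mem_product]; exact ⟨⟨huK, hwK⟩, huw⟩
      · rw [hg]
        simp only [Finset.mem_product, Finset.mem_filter, Finset.mem_univ, true_and]
        exact ⟨hawv, haux, huxlt⟩
    have hgcard : ∀ q ∈ pairs, (g q).card ≤ G.maxDegree * α := by
      intro q _
      rw [hg]
      simp only
      rw [Finset.card_product]
      refine Nat.mul_le_mul ?_ (hα q.1)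
      have : Finset.univ.filter (G.Adj q.2) = G.neighborFinset q.2 := by
        ext a; simp
      rw [this]
      exact G.degree_le_maxDegree q.2
    calc S.ncard ≤ (((pairs.biUnion g).image f : Finset (Finset V)) : Set (Finset V)).ncard :=
          Set.ncard_le_ncard hsub (Set.toFinite _)
      _ = ((pairs.biUnion g).image f).card := Set.ncard_coe_finset _
      _ ≤ (pairs.biUnion g).card := Finset.card_image_le
      _ ≤ ∑ q ∈ pairs, (g q).card := Finset.card_biUnion_le
      _ ≤ ∑ _q ∈ pairs, G.maxDegree * α := Finset.sum_le_sum hgcard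
      _ = pairs.card * (G.maxDegree * α) := by rw [Finset.sum_const, smul_eq_mul]
  have hpairs2 : pairs.card + pairs.card ≤ K.card * K.card := by
    have h1 : (pairs.image Prod.swap).card = pairs.card :=
      Finset.card_image_of_injective _ Prod.swap_injective
    have hdisj : Disjoint pairs (pairs.image Prod.swap) := by
      rw [Finset.disjoint_left]
      intro q hq hq'
      rw [Finset.mem_image] at hq'
      obtain ⟨q', hq', hqq⟩ := hq'
      rw [hpairs, Finset.mem_filter] at hq hq'
      subst hqq
      simp only [Prod.fst_swap, Prod.snd_swap] at hq
      exact absurd hq.2 (not_lt.mpr hq'.2.le)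
    have hsub2 : pairs ∪ pairs.image Prod.swap ⊆ K ×ˢ K := by
      intro q hq
      rw [Finset.mem_union] at hq
      rcases hq with hq | hq
      · exact Finset.filter_subset _ _ hq
      · rw [Finset.mem_image] at hq
        obtain ⟨q', hq', rfl⟩ := hq
        have := Finset.filter_subset _ _ hq'
        rw [Finset.mem_product] at this ⊢
        exact ⟨this.2, this.1⟩
    calc pairs.card + pairs.card = pairs.card + (pairs.image Prod.swap).card := by rw [h1]
      _ = (pairs ∪ pairs.image Prod.swap).card := (Finset.card_union_of_disjoint hdisj).symm
      _ ≤ (K ×ˢ K).card := Finset.card_le_card hsub2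
      _ = K.card * K.card := Finset.card_product _ _
  -- combine
  refine le_min ?_ ?_
  · calc (S.ncard : ℝ) ≤ (Fintype.card V * Fintype.card V : ℕ) := by exact_mod_cast hb1
      _ = (Fintype.card V : ℝ) ^ 2 := by push_cast; ring
  · rw [le_div_iff₀ (by norm_num : (0:ℝ) < 2)]
    have hnat : S.ncard * 2 ≤ k ^ 2 * α * G.maxDegree := by
      have h1 : S.ncard * 2 ≤ (pairs.card + pairs.card) * (G.maxDegree * α) := by
        nlinarith [hb2]
      have h2 : (pairs.card + pairs.card) * (G.maxDegree * α) ≤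
          (K.card * K.card) * (G.maxDegree * α) := Nat.mul_le_mul_right _ hpairs2
      have h3 : K.card * K.card ≤ k * k := by
        have : K.card ≤ k := by omega
        exact Nat.mul_le_mul this this
      calc S.ncard * 2 ≤ (K.card * K.card) * (G.maxDegree * α) := le_trans h1 h2
        _ ≤ (k * k) * (G.maxDegree * α) := Nat.mul_le_mul_right _ h3
        _ = k ^ 2 * α * G.maxDegree := by ring
    calc (S.ncard : ℝ) * 2 = ((S.ncard * 2 : ℕ) : ℝ) := by push_cast; ring
      _ ≤ ((k ^ 2 * α * G.maxDegree : ℕ) : ℝ) := by exact_mod_cast hnat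
      _ = (k : ℝ) ^ 2 * α * G.maxDegree := by push_cast; ring
end

section
/- Let G be a finite simple graph whose vertex set V carries a linear order <, and fix h ≥ 1. For each vertex v let Φ_v = binom(|N_v^+|, h−1) and let Φ = Σ_v Φ_v, and assume Φ > 0. For each vertex v with Φ_v > 0, let S_v be an (h−1)-clique prefixed shadow of G[N_v^+] with weight φ_v > 0. Let f be a nonnegative real-valued function on the h-cliques of G with F = Σ_{K ∈ C_h(G)} f(K). Consider the two-stage sampler that picks a vertex v with probability Φ_v/Φ and then outputs K = {v} ∪ A, where A is the output of the shadow sampler for S_v, and define the random variable X to equal (φ_v/Φ_v)·f(K) if K is an h-clique of G and 0 otherwise. Then E[X] = F/Φ; in particular, Φ·X is an unbiased estimator of F. -/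
open Finset

variable {V : Type*}

-- Lemma A
lemma aux_insert_clique [Fintype V] [LinearOrder V]
    (G : SimpleGraph V) [DecidableRel G.Adj] {h : ℕ} (hh : 1 ≤ h) {v : V} {K : Finset V}
    (hK : K ∈ G.cliqueFinset (h - 1)) (hsub : K ⊆ outNbr G v) :
    insert v K ∈ G.cliqueFinset h := by
  rw [SimpleGraph.mem_cliqueFinset_iff] at *
  obtain ⟨hc, hcard⟩ := hK
  have hout : ∀ u ∈ K, G.Adj v u ∧ v < u := by
    intro u hu; have := hsub hu; simpa [outNbr] using this
  have hv : v ∉ K := fun hv => lt_irrefl v (hout v hv).2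
  constructor
  · rw [Finset.coe_insert]
    exact hc.insert (fun b hb _ => (hout b hb).1)
  · rw [Finset.card_insert_of_notMem hv, hcard]; omega

-- Lemma B
lemma aux_sum_cliques [Fintype V] [LinearOrder V]
    (G : SimpleGraph V) [DecidableRel G.Adj] {h : ℕ} (hh : 1 ≤ h) (f : Finset V → ℝ) :
    ∑ K ∈ G.cliqueFinset h, f K =
      ∑ v : V, ∑ K ∈ (G.cliqueFinset (h - 1)).filter (· ⊆ outNbr G v), f (insert v K) := by
  rw [Finset.sum_sigma' Finset.univ
    (fun v => (G.cliqueFinset (h - 1)).filter (· ⊆ outNbr G v)) (fun v K => f (insert v K))]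
  have hne : ∀ K ∈ G.cliqueFinset h, K.Nonempty := by
    intro K hK
    rw [SimpleGraph.mem_cliqueFinset_iff] at hK
    exact Finset.card_pos.mp (by rw [hK.2]; omega)
  refine Finset.sum_bij' (fun K hK => (⟨K.min' (hne K hK), K.erase (K.min' (hne K hK))⟩ :
      Σ _ : V, Finset V)) (fun p _ => insert p.1 p.2) ?_ ?_ ?_ ?_ ?_
  · intro K hK
    rw [Finset.mem_sigma]
    refine ⟨Finset.mem_univ _, ?_⟩
    rw [Finset.mem_filter]
    have hKc := SimpleGraph.mem_cliqueFinset_iff.mp hK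
    set m := K.min' (hne K hK) with hm
    have hmK : m ∈ K := K.min'_mem _
    constructor
    · rw [SimpleGraph.mem_cliqueFinset_iff]
      constructor
      · exact hKc.1.subset (by exact_mod_cast Finset.erase_subset _ _)
      · rw [Finset.card_erase_of_mem hmK, hKc.2]
    · intro u hu
      have huK := Finset.mem_of_mem_erase hu
      have hum : u ≠ m := Finset.ne_of_mem_erase hu
      simp only [outNbr, Finset.mem_filter, Finset.mem_univ, true_and]
      exact ⟨hKc.1 hmK huK (Ne.symm hum), lt_of_le_of_ne (K.min'_le u huK) (Ne.symm hum)⟩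
  · intro p hp
    rw [Finset.mem_sigma, Finset.mem_filter] at hp
    exact aux_insert_clique G hh hp.2.1 hp.2.2
  · intro K hK
    exact Finset.insert_erase (K.min'_mem (hne K hK))
  · intro p hp
    rw [Finset.mem_sigma, Finset.mem_filter] at hp
    obtain ⟨-, hK, hsub⟩ := hp
    have hlt : ∀ u ∈ p.2, p.1 < u := by
      intro u hu
      have := hsub hu
      simp only [outNbr, Finset.mem_filter] at this
      exact this.2.2
    have hvK : p.1 ∉ p.2 := fun hv => lt_irrefl _ (hlt _ hv)
    have hmin : ∀ hne', (insert p.1 p.2).min' hne' = p.1 := by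
      intro hne'
      refine le_antisymm (Finset.min'_le _ _ (Finset.mem_insert_self _ _)) ?_
      apply Finset.le_min'
      intro y hy
      rcases Finset.mem_insert.mp hy with rfl | hy
      · exact le_refl _
      · exact le_of_lt (hlt y hy)
    rw [hmin, Finset.erase_insert hvK]
  · intro K hK
    exact (congrArg f (Finset.insert_erase (K.min'_mem (hne K hK)))).symm


-- Lemma C1
lemma aux_weight_mul_prob {I : Type*} [Fintype I] [DecidableEq V]
    (P S : I → Finset V) (ℓ : I → ℕ) (hw : 0 < shadowWeight S ℓ) (A : Finset V) :
    (shadowWeight S ℓ : ℝ) * shadowProb P S ℓ A =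
      ∑ i, ((((S i).powersetCard (ℓ i)).filter (fun c => P i ∪ c = A)).card : ℝ) := by
  rw [shadowProb, Finset.mul_sum]
  refine Finset.sum_congr rfl fun i _ => ?_
  by_cases hc : (S i).card.choose (ℓ i) = 0
  · have he : (S i).powersetCard (ℓ i) = ∅ := by
      rw [Finset.powersetCard_eq_empty]
      exact Nat.choose_eq_zero_iff.mp hc
    simp [hc, he]
  · have hw' : (shadowWeight S ℓ : ℝ) ≠ 0 := Nat.cast_ne_zero.mpr hw.ne'
    have hc' : ((S i).card.choose (ℓ i) : ℝ) ≠ 0 := Nat.cast_ne_zero.mpr hc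
    field_simp

-- Lemma C2
lemma aux_fiber_sum {β γ : Type*} [Fintype γ] [DecidableEq γ]
    (t : Finset β) (m : β → γ) (g : γ → ℝ) :
    ∑ A : γ, ((t.filter (fun c => m c = A)).card : ℝ) * g A = ∑ c ∈ t, g (m c) := by
  rw [← Finset.sum_fiberwise t m (fun c => g (m c))]
  refine Finset.sum_congr rfl fun A _ => ?_
  rw [Finset.sum_congr rfl (fun c hc => by rw [(Finset.mem_filter.mp hc).2]),
    Finset.sum_const, nsmul_eq_mul]

-- Key per-vertex lemma
lemma aux_key [Fintype V] [LinearOrder V]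
    (G : SimpleGraph V) [DecidableRel G.Adj] {h : ℕ} (hh : 1 ≤ h) (v : V)
    {I : Type*} [Fintype I] (P S : I → Finset V) (ℓ : I → ℕ)
    (hps : IsPrefixedShadowOn G (outNbr G v) (h - 1) P S ℓ)
    (hw : 0 < shadowWeight S ℓ) (f : Finset V → ℝ) :
    (shadowWeight S ℓ : ℝ) *
        (∑ A : Finset V, shadowProb P S ℓ A *
          (if insert v A ∈ G.cliqueFinset h then f (insert v A) else 0)) =
      ∑ K ∈ (G.cliqueFinset (h - 1)).filter (· ⊆ outNbr G v), f (insert v K) := by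
  obtain ⟨hP, hS, hcard, hbij⟩ := hps
  set g : Finset V → ℝ := fun A => if insert v A ∈ G.cliqueFinset h then f (insert v A) else 0
    with hg
  have step1 : (shadowWeight S ℓ : ℝ) * (∑ A : Finset V, shadowProb P S ℓ A * g A) =
      ∑ i, ∑ c ∈ (S i).powersetCard (ℓ i), g (P i ∪ c) := by
    rw [Finset.mul_sum]
    rw [Finset.sum_congr rfl (fun A _ => by
      rw [← mul_assoc, aux_weight_mul_prob P S ℓ hw A, Finset.sum_mul])]
    rw [Finset.sum_comm]
    exact Finset.sum_congr rfl fun i _ => aux_fiber_sum _ _ g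
  rw [step1]
  have step2 : ∀ i : I, ∑ c ∈ (S i).powersetCard (ℓ i), g (P i ∪ c) =
      ∑ c ∈ inducedCliques G (S i) (ℓ i), g (P i ∪ c) := by
    intro i
    refine (Finset.sum_subset ?_ ?_).symm
    · intro c hc
      rw [inducedCliques, Finset.mem_filter, SimpleGraph.mem_cliqueFinset_iff] at hc
      rw [Finset.mem_powersetCard]
      exact ⟨hc.2, hc.1.2⟩
    · intro c hc hnc
      rw [Finset.mem_powersetCard] at hc
      rw [hg]
      simp only [ite_eq_right_iff]
      intro hcl
      exfalso
      apply hnc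
      rw [inducedCliques, Finset.mem_filter, SimpleGraph.mem_cliqueFinset_iff]
      refine ⟨⟨?_, hc.2⟩, hc.1⟩
      have : (c : Set V) ⊆ ↑(insert v (P i ∪ c)) := by
        intro x hx
        simp only [Finset.coe_insert, Finset.coe_union, Set.mem_insert_iff, Set.mem_union]
        exact Or.inr (Or.inr hx)
      exact (SimpleGraph.mem_cliqueFinset_iff.mp hcl).1.subset this
  rw [Finset.sum_congr rfl (fun i _ => step2 i)]
  rw [Finset.sum_sigma' Finset.univ (fun i => inducedCliques G (S i) (ℓ i))
    (fun i c => g (P i ∪ c))]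
  have hsum : ∑ p ∈ Finset.univ.sigma (fun i => inducedCliques G (S i) (ℓ i)),
      g (P p.1 ∪ p.2) = ∑ K ∈ (G.cliqueFinset (h - 1)).filter (· ⊆ outNbr G v), g K := by
    refine Finset.sum_nbij (fun p => P p.1 ∪ p.2) ?_ ?_ ?_ ?_
    · intro p hp
      rw [Finset.mem_sigma] at hp
      exact hbij.mapsTo hp.2
    · intro p hp q hq hpq
      simp only [Finset.coe_sigma, Set.mem_sigma_iff] at hp hq
      exact hbij.injOn hp.2 hq.2 hpq
    · intro K hK
      obtain ⟨p, hp, hpK⟩ := hbij.surjOn hK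
      exact ⟨p, by simpa [Finset.mem_coe, Finset.mem_sigma] using hp, hpK⟩
    · intro p hp
      rfl
  rw [hsum]
  refine Finset.sum_congr rfl fun K hK => ?_
  rw [Finset.mem_filter] at hK
  rw [hg]
  simp only [if_pos (aux_insert_clique G hh hK.1 hK.2)]


/-- Unbiasedness of the two-stage (Inverse-TS) estimator: pick `v` with probability `Φ_v/Φ`,
let `A` be the output of the shadow sampler for an `(h−1)`-clique prefixed shadow `S_v` of
`G[N_v⁺]` with weight `φ_v > 0`, and set `K = {v} ∪ A`; if `X = (φ_v/Φ_v)·f(K)` when `K` is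
an `h`-clique of `G` and `X = 0` otherwise, then `E[X] = F/Φ`, where
`F = Σ_{K ∈ C_h(G)} f(K)`; in particular `Φ·X` is an unbiased estimator of `F`. -/
theorem twoStage_estimator_unbiased [Fintype V] [LinearOrder V]
    (G : SimpleGraph V) [DecidableRel G.Adj] (h : ℕ) (hh : 1 ≤ h)
    {I : V → Type*} [∀ v, Fintype (I v)]
    (P S : ∀ v, I v → Finset V) (ℓ : ∀ v, I v → ℕ)
    (Φ : V → ℕ) (hΦ : ∀ v, Φ v = ((outNbr G v).card.choose (h - 1)))
    (Φt : ℕ) (hΦt : Φt = ∑ v, Φ v) (hΦpos : 0 < Φt)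
    (hshadow : ∀ v, 0 < Φ v →
      IsPrefixedShadowOn G (outNbr G v) (h - 1) (P v) (S v) (ℓ v) ∧
        0 < shadowWeight (S v) (ℓ v))
    (f : Finset V → ℝ) (hf : ∀ K, 0 ≤ f K)
    (F : ℝ) (hF : F = ∑ K ∈ G.cliqueFinset h, f K) :
    (∑ v : V, ((Φ v : ℝ) / (Φt : ℝ)) *
        (∑ A : Finset V, shadowProb (P v) (S v) (ℓ v) A *
          (if insert v A ∈ G.cliqueFinset h then
              ((shadowWeight (S v) (ℓ v) : ℝ) / (Φ v : ℝ)) * f (insert v A)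
            else 0))) =
      F / (Φt : ℝ) := by
  subst hF
  have hΦtR : ((Φt : ℕ) : ℝ) ≠ 0 := Nat.cast_ne_zero.mpr hΦpos.ne'
  rw [aux_sum_cliques G hh f, Finset.sum_div]
  refine Finset.sum_congr rfl fun v _ => ?_
  by_cases hv : 0 < Φ v
  · obtain ⟨hps, hw⟩ := hshadow v hv
    have key := aux_key G hh v (P v) (S v) (ℓ v) hps hw f
    have hΦv : ((Φ v : ℕ) : ℝ) ≠ 0 := Nat.cast_ne_zero.mpr hv.ne'
    have hinner : ∑ A : Finset V, shadowProb (P v) (S v) (ℓ v) A *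
        (if insert v A ∈ G.cliqueFinset h then
          ((shadowWeight (S v) (ℓ v) : ℝ) / (Φ v : ℝ)) * f (insert v A) else 0) =
        ((shadowWeight (S v) (ℓ v) : ℝ) / (Φ v : ℝ)) *
          ∑ A : Finset V, shadowProb (P v) (S v) (ℓ v) A *
            (if insert v A ∈ G.cliqueFinset h then f (insert v A) else 0) := by
      rw [Finset.mul_sum]
      refine Finset.sum_congr rfl fun A _ => ?_
      split <;> ring
    rw [hinner, ← key]
    field_simp
  · have hv0 : Φ v = 0 := Nat.eq_zero_of_not_pos hv
    have hemp : (G.cliqueFinset (h - 1)).filter (· ⊆ outNbr G v) = ∅ := by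
      rw [Finset.filter_eq_empty_iff]
      intro K hK hsub
      have h1 := (SimpleGraph.mem_cliqueFinset_iff.mp hK).2
      have h2 : (outNbr G v).card < h - 1 := Nat.choose_eq_zero_iff.mp (hΦ v ▸ hv0)
      have := Finset.card_le_card hsub
      omega
    rw [hemp]
    simp [hv0]
end
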